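/- arXiv:2501.00694 — 5 statements merged into one kernel-verified Lean document; each statement's English description precedes it below -/
import Mathlib

section
/- A subspace F of a cosymplectic vector space (V,b,ψ) with Reeb vector ξ is Lagrangian-like if and only if F is cosymplectically isotropic and dim F = dim F^{b,ψ} − 1. -/
open Module Submodule

variable {V : Type*} [AddCommGroup V] [Module ℝ V]

/-- The map `Ĩ_{ψ,b}` sending `v` to the functional `y ↦ b v y + ψ v * ψ y`. -/
noncomputable def Itilde (b : V →ₗ[ℝ] V →ₗ[ℝ] ℝ) (ψ : V →ₗ[ℝ] ℝ) :
    V →ₗ[ℝ] V →ₗ[ℝ] ℝ :=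
  b + ψ.smulRight ψ

/-- `(V, b, ψ)` is a cosymplectic vector space. -/
def IsCosymplectic (b : V →ₗ[ℝ] V →ₗ[ℝ] ℝ) (ψ : V →ₗ[ℝ] ℝ) : Prop :=
  (∀ x y, b x y = - b y x) ∧ ψ ≠ 0 ∧ Function.Bijective (Itilde b ψ)

/-- The cosymplectic orthogonal `F^{b,ψ}` of a subspace `F`. -/
noncomputable def cosymOrth (b : V →ₗ[ℝ] V →ₗ[ℝ] ℝ) (ψ : V →ₗ[ℝ] ℝ)
    (F : Submodule ℝ V) : Submodule ℝ V where
  carrier := {x | ∀ y ∈ F, Itilde b ψ x y = 0}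
  add_mem' := by
    intro a b' ha hb y hy
    simp only [map_add, LinearMap.add_apply, ha y hy, hb y hy, add_zero]
  zero_mem' := by intro y hy; simp
  smul_mem' := by
    intro c x hx y hy
    simp only [map_smul, LinearMap.smul_apply, hx y hy, smul_zero]

/-- `F` is a Lagrangian-like subspace of `(V,b,ψ)` with Reeb vector `ξ`:
isotropic, does not contain the Reeb vector, and `F^{b,ψ} = span(ξ) ⊕ F`. -/
def IsLagrangianLike (b : V →ₗ[ℝ] V →ₗ[ℝ] ℝ) (ψ : V →ₗ[ℝ] ℝ) (ξ : V)
    (F : Submodule ℝ V) : Prop :=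
  (∀ x ∈ F, ∀ y ∈ F, Itilde b ψ x y = 0) ∧ ξ ∉ F ∧
    Disjoint (Submodule.span ℝ {ξ}) F ∧
    cosymOrth b ψ F = Submodule.span ℝ {ξ} ⊔ F

/-- `F` is Lagrangian-like iff `F` is cosymplectically isotropic and
`dim F = dim F^{b,ψ} - 1`. -/
theorem isLagrangianLike_iff_isotropic_finrank [FiniteDimensional ℝ V]
    (b : V →ₗ[ℝ] V →ₗ[ℝ] ℝ) (ψ : V →ₗ[ℝ] ℝ) (h : IsCosymplectic b ψ)
    (ξ : V) (hξ1 : ψ ξ = 1) (hξ2 : ∀ y, b ξ y = 0)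
    (F : Submodule ℝ V) :
    IsLagrangianLike b ψ ξ F ↔
      (∀ x ∈ F, ∀ y ∈ F, Itilde b ψ x y = 0) ∧
        finrank ℝ F = finrank ℝ (cosymOrth b ψ F) - 1 := by
  have hξ0 : ξ ≠ 0 := fun hz => by simp [hz] at hξ1
  have hIt : ∀ x y : V, Itilde b ψ x y = b x y + ψ x * ψ y := by
    intro x y; simp [Itilde, LinearMap.smulRight_apply]
  have hfr1 : finrank ℝ (Submodule.span ℝ ({ξ} : Set V)) = 1 :=
    finrank_span_singleton hξ0
  -- from isotropy, ψ vanishes on F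
  have hψF : (∀ x ∈ F, ∀ y ∈ F, Itilde b ψ x y = 0) → ∀ x ∈ F, ψ x = 0 := by
    intro hiso x hx
    have hbxx : b x x = 0 := by
      have := h.1 x x; linarith
    have := hiso x hx x hx
    rw [hIt, hbxx, zero_add] at this
    exact pow_eq_zero_iff (n := 2) (by norm_num) |>.mp (by nlinarith)
  -- disjointness follows from ψ vanishing on F
  have hdisj' : (∀ x ∈ F, ψ x = 0) → Disjoint (Submodule.span ℝ ({ξ} : Set V)) F := by
    intro hψ
    rw [Submodule.disjoint_def]
    intro x hx1 hx2
    obtain ⟨c, rfl⟩ := Submodule.mem_span_singleton.mp hx1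
    have : ψ (c • ξ) = 0 := hψ _ hx2
    rw [map_smul, hξ1, smul_eq_mul, mul_one] at this
    rw [this, zero_smul]
  have hsum : ∀ (p : Submodule ℝ V), Disjoint (Submodule.span ℝ ({ξ} : Set V)) p →
      finrank ℝ (Submodule.span ℝ ({ξ} : Set V) ⊔ p : Submodule ℝ V)
        = 1 + finrank ℝ p := by
    intro p hd
    have := Submodule.finrank_sup_add_finrank_inf_eq (Submodule.span ℝ ({ξ} : Set V)) p
    rw [disjoint_iff.mp hd] at this
    simp only [finrank_bot, add_zero] at this
    rw [this, hfr1]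
  constructor
  · rintro ⟨hiso, hnm, hdisj, heq⟩
    refine ⟨hiso, ?_⟩
    rw [heq, hsum F hdisj]
    omega
  · rintro ⟨hiso, hfr⟩
    have hψ := hψF hiso
    have hdisj := hdisj' hψ
    have hnm : ξ ∉ F := fun hm => by
      have := hψ ξ hm; rw [hξ1] at this; norm_num at this
    -- span ξ ⊔ F ≤ cosymOrth
    have hξmem : ξ ∈ cosymOrth b ψ F := by
      intro y hy
      rw [hIt, hξ2, hξ1, one_mul, hψ y hy, zero_add]
    have hFmem : F ≤ cosymOrth b ψ F := fun x hx y hy => hiso x hx y hy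
    have hle : Submodule.span ℝ ({ξ} : Set V) ⊔ F ≤ cosymOrth b ψ F :=
      sup_le (Submodule.span_le.mpr (by simpa using hξmem)) hFmem
    have hξorth : finrank ℝ (Submodule.span ℝ ({ξ} : Set V)) ≤
        finrank ℝ (cosymOrth b ψ F) :=
      Submodule.finrank_mono (Submodule.span_le.mpr (by simpa using hξmem))
    have h1le : 1 ≤ finrank ℝ (cosymOrth b ψ F) := by omega
    have heq : Submodule.span ℝ ({ξ} : Set V) ⊔ F = cosymOrth b ψ F := by
      apply Submodule.eq_of_le_of_finrank_le hle
      rw [hsum F hdisj]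
      omega
    exact ⟨hiso, hnm, hdisj, heq.symm⟩
end

section
/- A subspace F of a cosymplectic vector space is Lagrangian-like if and only if it is maximal among cosymplectically isotropic subspaces. -/
open Module Submodule

variable {V : Type*} [AddCommGroup V] [Module ℝ V]

lemma Itilde_apply (b : V →ₗ[ℝ] V →ₗ[ℝ] ℝ) (ψ : V →ₗ[ℝ] ℝ) (x y : V) :
    Itilde b ψ x y = b x y + ψ x * ψ y := rfl

lemma psi_eq_zero_of_isotropic {b : V →ₗ[ℝ] V →ₗ[ℝ] ℝ} {ψ : V →ₗ[ℝ] ℝ}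
    (hb : ∀ x y, b x y = - b y x) {F : Submodule ℝ V}
    (hiso : ∀ x ∈ F, ∀ y ∈ F, Itilde b ψ x y = 0) {x : V} (hx : x ∈ F) :
    ψ x = 0 := by
  have hbxx : b x x = 0 := by
    have := hb x x; linarith
  have := hiso x hx x hx
  rw [Itilde_apply, hbxx, zero_add] at this
  exact mul_self_eq_zero.mp this

/-- `F` is Lagrangian-like iff it is maximal among cosymplectically
isotropic subspaces. -/
theorem isLagrangianLike_iff_maximal_isotropic [FiniteDimensional ℝ V]
    (b : V →ₗ[ℝ] V →ₗ[ℝ] ℝ) (ψ : V →ₗ[ℝ] ℝ) (h : IsCosymplectic b ψ)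
    (ξ : V) (hξ1 : ψ ξ = 1) (hξ2 : ∀ y, b ξ y = 0)
    (F : Submodule ℝ V) :
    IsLagrangianLike b ψ ξ F ↔
      ((∀ x ∈ F, ∀ y ∈ F, Itilde b ψ x y = 0) ∧
        ∀ G : Submodule ℝ V, (∀ x ∈ G, ∀ y ∈ G, Itilde b ψ x y = 0) →
          F ≤ G → G = F) := by
  obtain ⟨hb, -, -⟩ := h
  constructor
  · rintro ⟨hiso, hξF, hdisj, horth⟩
    refine ⟨hiso, fun G hG hFG => ?_⟩
    refine le_antisymm (fun g hg => ?_) hFG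
    have hgorth : g ∈ cosymOrth b ψ F := fun y hy => hG g hg y (hFG hy)
    rw [horth] at hgorth
    obtain ⟨u, hu, f, hf, huf⟩ := Submodule.mem_sup.mp hgorth
    obtain ⟨c, rfl⟩ := Submodule.mem_span_singleton.mp hu
    have hψg : ψ g = 0 := psi_eq_zero_of_isotropic hb hG hg
    have hψf : ψ f = 0 := psi_eq_zero_of_isotropic hb hiso hf
    have hc : c = 0 := by
      have := congrArg ψ huf
      simp [hψf, hξ1, hψg] at this
      exact this
    rw [← huf, hc, zero_smul, zero_add]
    exact hf
  · rintro ⟨hiso, hmax⟩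
    have hψF : ∀ x ∈ F, ψ x = 0 := fun x hx => psi_eq_zero_of_isotropic hb hiso hx
    have hξF : ξ ∉ F := fun hx => by simpa [hξ1] using hψF ξ hx
    have hdisj : Disjoint (Submodule.span ℝ {ξ}) F := by
      rw [Submodule.disjoint_def]
      intro x hx hxF
      obtain ⟨c, rfl⟩ := Submodule.mem_span_singleton.mp hx
      have : c = 0 := by
        have := hψF _ hxF
        simpa [hξ1] using this
      simp [this]
    refine ⟨hiso, hξF, hdisj, le_antisymm ?_ ?_⟩
    · -- cosymOrth ≤ span ξ ⊔ F
      intro x hx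
      set x' := x - ψ x • ξ with hx'def
      have hψx' : ψ x' = 0 := by simp [hx'def, hξ1]
      have hx'orth : ∀ y ∈ F, Itilde b ψ x' y = 0 := by
        intro y hy
        have h1 : Itilde b ψ x y = 0 := hx y hy
        simp only [hx'def, map_sub, map_smul, LinearMap.sub_apply, LinearMap.smul_apply, h1]
        rw [Itilde_apply, hξ2, hξ1, one_mul, hψF y hy]
        simp
      -- the enlarged subspace F ⊔ span x' is isotropic
      have hGiso : ∀ u ∈ F ⊔ Submodule.span ℝ {x'}, ∀ v ∈ F ⊔ Submodule.span ℝ {x'},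
          Itilde b ψ u v = 0 := by
        intro u hu v hv
        obtain ⟨f1, hf1, s1, hs1, rfl⟩ := Submodule.mem_sup.mp hu
        obtain ⟨f2, hf2, s2, hs2, rfl⟩ := Submodule.mem_sup.mp hv
        obtain ⟨a, rfl⟩ := Submodule.mem_span_singleton.mp hs1
        obtain ⟨c, rfl⟩ := Submodule.mem_span_singleton.mp hs2
        have hIf1f2 : Itilde b ψ f1 f2 = 0 := hiso f1 hf1 f2 hf2
        have hIx'f2 : Itilde b ψ x' f2 = 0 := hx'orth f2 hf2
        have hIx'f1 : Itilde b ψ x' f1 = 0 := hx'orth f1 hf1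
        have hIf1x' : Itilde b ψ f1 x' = 0 := by
          rw [Itilde_apply] at hIx'f1 ⊢
          rw [hψx', zero_mul, add_zero] at hIx'f1
          rw [hψx', mul_zero, add_zero, hb, hIx'f1, neg_zero]
        have hIx'x' : Itilde b ψ x' x' = 0 := by
          rw [Itilde_apply, hψx', mul_zero, add_zero]
          have := hb x' x'; linarith
        simp only [map_add, map_smul, LinearMap.add_apply, LinearMap.smul_apply,
          hIf1f2, hIx'f2, hIf1x', hIx'x', smul_zero, add_zero, zero_add]
      have hGF : F ⊔ Submodule.span ℝ {x'} = F := hmax _ hGiso le_sup_left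
      have hx'F : x' ∈ F := by
        rw [← hGF]
        exact Submodule.mem_sup_right (Submodule.mem_span_singleton_self x')
      have : x = ψ x • ξ + x' := by rw [hx'def]; abel
      rw [this]
      exact Submodule.add_mem _
        (Submodule.mem_sup_left (Submodule.smul_mem _ _ (Submodule.mem_span_singleton_self ξ)))
        (Submodule.mem_sup_right hx'F)
    · -- span ξ ⊔ F ≤ cosymOrth
      refine sup_le ?_ ?_
      · rw [Submodule.span_le, Set.singleton_subset_iff]
        intro y hy
        rw [Itilde_apply, hξ2, hξ1, one_mul, hψF y hy, zero_add]
      · intro f hf y hy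
        exact hiso f hf y hy
end

section
/- Every cosymplectically isotropic subspace F of a finite-dimensional cosymplectic vector space (V,b,ψ) is contained in a Lagrangian-like subspace L with F ⊆ L ⊆ F^{b,ψ}. -/
open Module Submodule

variable {V : Type*} [AddCommGroup V] [Module ℝ V]

lemma mem_cosymOrth (b : V →ₗ[ℝ] V →ₗ[ℝ] ℝ) (ψ : V →ₗ[ℝ] ℝ)
    (F : Submodule ℝ V) (x : V) :
    x ∈ cosymOrth b ψ F ↔ ∀ y ∈ F, Itilde b ψ x y = 0 := Iff.rfl

/-- every cosymplectically isotropic subspace is contained in a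
Lagrangian-like subspace `L` with `F ⊆ L ⊆ F^{b,ψ}`. -/
theorem exists_lagrangianLike_of_isotropic [FiniteDimensional ℝ V]
    (b : V →ₗ[ℝ] V →ₗ[ℝ] ℝ) (ψ : V →ₗ[ℝ] ℝ) (h : IsCosymplectic b ψ)
    (ξ : V) (hξ1 : ψ ξ = 1) (hξ2 : ∀ y, b ξ y = 0)
    (F : Submodule ℝ V) (hF : ∀ x ∈ F, ∀ y ∈ F, Itilde b ψ x y = 0) :
    ∃ L : Submodule ℝ V, IsLagrangianLike b ψ ξ L ∧ F ≤ L ∧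
      L ≤ cosymOrth b ψ F := by
  obtain ⟨hanti, -, -⟩ := h
  have hIξ : ∀ y, Itilde b ψ ξ y = ψ y := by
    intro y; rw [Itilde_apply, hξ2, hξ1]; ring
  have hbxx : ∀ x : V, b x x = 0 := by intro x; have := hanti x x; linarith
  have hiso_psi : ∀ (L : Submodule ℝ V), (∀ x ∈ L, ∀ y ∈ L, Itilde b ψ x y = 0) →
      ∀ x ∈ L, ψ x = 0 := by
    intro L hL x hx
    have h1 := hL x hx x hx
    rw [Itilde_apply, hbxx] at h1
    nlinarith [sq_nonneg (ψ x)]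
  obtain ⟨L, ⟨hFL, hL⟩, hmax⟩ :=
    (set_has_maximal_iff_noetherian.mpr inferInstance)
      {L : Submodule ℝ V | F ≤ L ∧ ∀ x ∈ L, ∀ y ∈ L, Itilde b ψ x y = 0}
      ⟨F, le_refl F, hF⟩
  have hψL : ∀ x ∈ L, ψ x = 0 := hiso_psi L hL
  have hξL : ξ ∉ L := by
    intro hmem
    have := hψL ξ hmem
    rw [hξ1] at this; norm_num at this
  have hdisj : Disjoint (span ℝ {ξ}) L := by
    rw [disjoint_def]
    intro v hv1 hv2
    obtain ⟨c, rfl⟩ := mem_span_singleton.mp hv1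
    have h0 := hψL _ hv2
    simp only [map_smul, hξ1, smul_eq_mul, mul_one] at h0
    simp [h0]
  refine ⟨L, ⟨hL, hξL, hdisj, ?_⟩, hFL, ?_⟩
  · apply le_antisymm
    · intro x hx
      rw [mem_cosymOrth] at hx
      set x' := x - ψ x • ξ with hx'def
      have hψx' : ψ x' = 0 := by simp [hx'def, hξ1]
      have hIx'y : ∀ y ∈ L, Itilde b ψ x' y = 0 := by
        intro y hy
        rw [hx'def]
        rw [map_sub, map_smul, LinearMap.sub_apply, LinearMap.smul_apply,
          hx y hy, hIξ, hψL y hy]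
        simp
      have hIyx' : ∀ y ∈ L, Itilde b ψ y x' = 0 := by
        intro y hy
        have h1 := hIx'y y hy
        rw [Itilde_apply] at h1 ⊢
        rw [hψL y hy, hψx'] at *
        have := hanti y x'
        linarith
      have hIx'x' : Itilde b ψ x' x' = 0 := by
        rw [Itilde_apply, hbxx, hψx']; ring
      have hx'L : x' ∈ L := by
        by_contra hx'L
        have hlt : L < L ⊔ span ℝ {x'} := by
          refine lt_of_le_of_ne le_sup_left ?_
          intro heq
          exact hx'L (heq ▸ Submodule.mem_sup_right (mem_span_singleton_self x'))
        refine hmax (L ⊔ span ℝ {x'}) ⟨hFL.trans le_sup_left, ?_⟩ hlt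
        intro u hu v hv
        obtain ⟨a, ha, s, hs, rfl⟩ := mem_sup.mp hu
        obtain ⟨a', ha', s', hs', rfl⟩ := mem_sup.mp hv
        obtain ⟨c, rfl⟩ := mem_span_singleton.mp hs
        obtain ⟨d, rfl⟩ := mem_span_singleton.mp hs'
        simp only [map_add, map_smul, LinearMap.add_apply, LinearMap.smul_apply,
          hL a ha a' ha', hIyx' a ha, hIx'y a' ha', hIx'x', smul_zero, add_zero,
          zero_add]
      have : x = ψ x • ξ + x' := by rw [hx'def]; abel
      rw [this]
      exact add_mem_sup (smul_mem _ _ (mem_span_singleton_self ξ)) hx'L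
    · refine sup_le ?_ ?_
      · rw [span_le, Set.singleton_subset_iff]
        intro y hy
        rw [hIξ, hψL y hy]
      · intro x hx y hy
        exact hL x hx y hy
  · intro x hx y hy
    exact hL x hx y (hFL hy)
end

section
/- Given finitely many Lagrangian-like subspaces L₁,…,L_k of a cosymplectic vector space (V,b,ψ), there exists a Lagrangian-like subspace L with L ∩ Lⱼ = {0} for all j = 1,…,k. -/
open Module Submodule

variable {V : Type*} [AddCommGroup V] [Module ℝ V]

namespace CosymAux
set_option linter.unusedSectionVars false

lemma Itilde_apply (b : V →ₗ[ℝ] V →ₗ[ℝ] ℝ) (ψ : V →ₗ[ℝ] ℝ) (x y : V) :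
    Itilde b ψ x y = b x y + ψ x * ψ y := by
  simp [Itilde, LinearMap.smulRight_apply, smul_eq_mul]

lemma mem_cosymOrth {b : V →ₗ[ℝ] V →ₗ[ℝ] ℝ} {ψ : V →ₗ[ℝ] ℝ}
    {F : Submodule ℝ V} {x : V} :
    x ∈ cosymOrth b ψ F ↔ ∀ y ∈ F, Itilde b ψ x y = 0 := Iff.rfl

lemma cosymOrth_antitone {b : V →ₗ[ℝ] V →ₗ[ℝ] ℝ} {ψ : V →ₗ[ℝ] ℝ}
    {F G : Submodule ℝ V} (h : F ≤ G) :
    cosymOrth b ψ G ≤ cosymOrth b ψ F := fun _ hx y hy => hx y (h hy)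

variable [FiniteDimensional ℝ V] {b : V →ₗ[ℝ] V →ₗ[ℝ] ℝ} {ψ : V →ₗ[ℝ] ℝ}

lemma cosymOrth_eq_ker (F : Submodule ℝ V) :
    cosymOrth b ψ F = LinearMap.ker (F.subtype.dualMap ∘ₗ Itilde b ψ) := by
  ext x
  simp only [mem_cosymOrth, LinearMap.mem_ker, LinearMap.comp_apply]
  constructor
  · intro hx
    ext y
    exact hx y y.2
  · intro hx y hy
    have := LinearMap.congr_fun hx (⟨y, hy⟩ : F)
    simpa using this

lemma finrank_cosymOrth (hbij : Function.Bijective (Itilde b ψ)) (F : Submodule ℝ V) :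
    finrank ℝ (cosymOrth b ψ F) + finrank ℝ F = finrank ℝ V := by
  have hsurj : Function.Surjective (F.subtype.dualMap ∘ₗ Itilde b ψ) :=
    (LinearMap.dualMap_surjective_of_injective F.injective_subtype).comp hbij.2
  have h1 := LinearMap.finrank_range_add_finrank_ker (F.subtype.dualMap ∘ₗ Itilde b ψ)
  rw [LinearMap.range_eq_top.mpr hsurj, finrank_top,
    Subspace.dual_finrank_eq] at h1
  rw [cosymOrth_eq_ker]
  omega


variable {ξ : V}

lemma xi_mem_cosymOrth (hξ1 : ψ ξ = 1) (hξ2 : ∀ y, b ξ y = 0)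
    {F : Submodule ℝ V} (hF : F ≤ LinearMap.ker ψ) : ξ ∈ cosymOrth b ψ F := by
  intro y hy
  have : ψ y = 0 := hF hy
  rw [Itilde_apply, hξ2, this, mul_zero, add_zero]

lemma sup_ker_eq_top (hξ1 : ψ ξ = 1) {A : Submodule ℝ V} (hA : ξ ∈ A) :
    A ⊔ LinearMap.ker ψ = ⊤ := by
  rw [eq_top_iff]
  intro x _
  have hx : x = ψ x • ξ + (x - ψ x • ξ) := by abel
  rw [hx]
  refine add_mem (mem_sup_left (smul_mem _ _ hA)) (mem_sup_right ?_)
  simp [LinearMap.mem_ker, hξ1]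

lemma finrank_ker_psi (hξ1 : ψ ξ = 1) :
    finrank ℝ (LinearMap.ker ψ) + 1 = finrank ℝ V := by
  have hsurj : Function.Surjective ψ := fun r => ⟨r • ξ, by simp [hξ1]⟩
  have h1 := LinearMap.finrank_range_add_finrank_ker ψ
  rw [LinearMap.range_eq_top.mpr hsurj, finrank_top, finrank_self] at h1
  omega

lemma finrank_inf_ker (hξ1 : ψ ξ = 1) {A : Submodule ℝ V} (hA : ξ ∈ A) :
    finrank ℝ (A ⊓ LinearMap.ker ψ : Submodule ℝ V) + 1 = finrank ℝ A := by
  have h1 := Submodule.finrank_sup_add_finrank_inf_eq A (LinearMap.ker ψ)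
  rw [sup_ker_eq_top hξ1 hA, finrank_top] at h1
  have h2 := finrank_ker_psi hξ1
  omega

lemma finrank_perpW (hbij : Function.Bijective (Itilde b ψ)) (hξ1 : ψ ξ = 1)
    (hξ2 : ∀ y, b ξ y = 0) {F : Submodule ℝ V} (hF : F ≤ LinearMap.ker ψ) :
    finrank ℝ (cosymOrth b ψ F ⊓ LinearMap.ker ψ : Submodule ℝ V) + finrank ℝ F
      = finrank ℝ (LinearMap.ker ψ) := by
  have h1 := finrank_inf_ker hξ1 (xi_mem_cosymOrth hξ1 hξ2 hF)
  have h2 := finrank_cosymOrth hbij F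
  have h3 := finrank_ker_psi (ξ := ξ) hξ1
  omega

lemma le_perpW_perpW (hskew : ∀ x y, b x y = - b y x)
    {F : Submodule ℝ V} (hF : F ≤ LinearMap.ker ψ) :
    F ≤ cosymOrth b ψ (cosymOrth b ψ F ⊓ LinearMap.ker ψ) ⊓ LinearMap.ker ψ := by
  intro x hx
  refine ⟨?_, hF hx⟩
  intro y hy
  have h1 : Itilde b ψ y x = 0 := hy.1 x hx
  rw [Itilde_apply] at h1 ⊢
  have hψx : ψ x = 0 := hF hx
  have hψy : ψ y = 0 := hy.2
  rw [hψx, hψy] at h1 ⊢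
  rw [hskew]
  linarith [h1]

lemma perpW_perpW (hskew : ∀ x y, b x y = - b y x)
    (hbij : Function.Bijective (Itilde b ψ)) (hξ1 : ψ ξ = 1)
    (hξ2 : ∀ y, b ξ y = 0) {F : Submodule ℝ V} (hF : F ≤ LinearMap.ker ψ) :
    cosymOrth b ψ (cosymOrth b ψ F ⊓ LinearMap.ker ψ) ⊓ LinearMap.ker ψ = F := by
  have h1 := finrank_perpW hbij hξ1 hξ2 hF
  have h2 := finrank_perpW hbij hξ1 hξ2
    (inf_le_right : cosymOrth b ψ F ⊓ LinearMap.ker ψ ≤ LinearMap.ker ψ)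
  exact (Submodule.eq_of_le_of_finrank_le (le_perpW_perpW hskew hF) (by omega)).symm


lemma lagrangian_le_ker (hskew : ∀ x y, b x y = - b y x)
    {F : Submodule ℝ V} (hF : IsLagrangianLike b ψ ξ F) : F ≤ LinearMap.ker ψ := by
  intro x hx
  have h1 : Itilde b ψ x x = 0 := hF.1 x hx x hx
  rw [Itilde_apply] at h1
  have hb : b x x = 0 := by have := hskew x x; linarith
  rw [hb, zero_add] at h1
  simpa [LinearMap.mem_ker] using mul_self_eq_zero.mp h1

lemma perpW_lagrangian (hskew : ∀ x y, b x y = - b y x) (hξ1 : ψ ξ = 1)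
    {F : Submodule ℝ V} (hF : IsLagrangianLike b ψ ξ F) :
    cosymOrth b ψ F ⊓ LinearMap.ker ψ = F := by
  rw [hF.2.2.2]
  apply le_antisymm
  · rintro x ⟨hx1, hx2⟩
    obtain ⟨y, hy, z, hz, rfl⟩ := Submodule.mem_sup.mp hx1
    rw [Submodule.mem_span_singleton] at hy
    obtain ⟨c, rfl⟩ := hy
    have hψz : ψ z = 0 := lagrangian_le_ker hskew hF hz
    have : ψ (c • ξ + z) = 0 := hx2
    rw [map_add, map_smul, hξ1, hψz, add_zero, smul_eq_mul, mul_one] at this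
    rw [this, zero_smul, zero_add]
    exact hz
  · exact le_inf le_sup_right (lagrangian_le_ker hskew hF)

lemma finrank_lagrangian (hskew : ∀ x y, b x y = - b y x)
    (hbij : Function.Bijective (Itilde b ψ)) (hξ1 : ψ ξ = 1) (hξ2 : ∀ y, b ξ y = 0)
    {F : Submodule ℝ V} (hF : IsLagrangianLike b ψ ξ F) :
    finrank ℝ (LinearMap.ker ψ) = 2 * finrank ℝ F := by
  have h1 := finrank_perpW hbij hξ1 hξ2 (lagrangian_le_ker hskew hF)
  rw [perpW_lagrangian hskew hξ1 hF] at h1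
  omega

/-- Key step: the perp of `S` inside `ker ψ` is not contained in `S ⊔ Lj`. -/
lemma perpW_not_le (hskew : ∀ x y, b x y = - b y x)
    (hbij : Function.Bijective (Itilde b ψ)) (hξ1 : ψ ξ = 1) (hξ2 : ∀ y, b ξ y = 0)
    {S Lj : Submodule ℝ V} (hS : S ≤ LinearMap.ker ψ)
    (hiso : ∀ x ∈ S, ∀ y ∈ S, Itilde b ψ x y = 0)
    (hdisj : S ⊓ Lj = ⊥) (hLj : IsLagrangianLike b ψ ξ Lj)
    (hne : cosymOrth b ψ S ⊓ LinearMap.ker ψ ≠ S) :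
    ¬ (cosymOrth b ψ S ⊓ LinearMap.ker ψ ≤ S ⊔ Lj) := by
  intro hUle
  set U : Submodule ℝ V := cosymOrth b ψ S ⊓ LinearMap.ker ψ with hUdef
  have hSU : S ≤ U := le_inf (fun x hx y hy => hiso x hx y hy) hS
  have hLjker := lagrangian_le_ker hskew hLj
  have hSL : S ⊔ Lj ≤ LinearMap.ker ψ := sup_le hS hLjker
  -- P := perp of S ⊔ Lj
  set P : Submodule ℝ V := cosymOrth b ψ (S ⊔ Lj) ⊓ LinearMap.ker ψ with hPdef
  have hPS : P ≤ S := by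
    have h1 : P ≤ cosymOrth b ψ U ⊓ LinearMap.ker ψ :=
      inf_le_inf_right _ (cosymOrth_antitone hUle)
    rwa [hUdef, perpW_perpW hskew hbij hξ1 hξ2 hS] at h1
  have hPL : P ≤ Lj := by
    have h1 : P ≤ cosymOrth b ψ Lj ⊓ LinearMap.ker ψ :=
      inf_le_inf_right _ (cosymOrth_antitone le_sup_right)
    rwa [perpW_lagrangian hskew hξ1 hLj] at h1
  have hPbot : P = ⊥ :=
    le_bot_iff.mp (hdisj ▸ le_inf hPS hPL)
  have hfP : finrank ℝ P = 0 := by rw [hPbot]; exact finrank_bot ℝ V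
  have h1 := finrank_perpW hbij hξ1 hξ2 hSL
  rw [← hPdef, hfP, zero_add] at h1
  have h2 := Submodule.finrank_sup_add_finrank_inf_eq S Lj
  rw [hdisj, finrank_bot] at h2
  have h3 := finrank_lagrangian hskew hbij hξ1 hξ2 hLj
  have h4 := finrank_perpW hbij hξ1 hξ2 hS
  rw [← hUdef] at h4
  have h5 : finrank ℝ S < finrank ℝ U :=
    Submodule.finrank_lt_finrank_of_lt (lt_of_le_of_ne hSU (Ne.symm hne))
  omega

/-- Termination: if the perp in `ker ψ` of an isotropic `S` equals `S`,
then `S` is Lagrangian-like. -/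
lemma isLagrangianLike_of_perpW_eq (hξ1 : ψ ξ = 1) (hξ2 : ∀ y, b ξ y = 0)
    {S : Submodule ℝ V} (hS : S ≤ LinearMap.ker ψ)
    (hiso : ∀ x ∈ S, ∀ y ∈ S, Itilde b ψ x y = 0)
    (hU : cosymOrth b ψ S ⊓ LinearMap.ker ψ = S) :
    IsLagrangianLike b ψ ξ S := by
  refine ⟨hiso, ?_, ?_, ?_⟩
  · intro hc
    have : ψ ξ = 0 := hS hc
    rw [hξ1] at this; exact one_ne_zero this
  · rw [Submodule.disjoint_def]
    intro x hx1 hx2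
    rw [Submodule.mem_span_singleton] at hx1
    obtain ⟨c, rfl⟩ := hx1
    have : ψ (c • ξ) = 0 := hS hx2
    rw [map_smul, hξ1, smul_eq_mul, mul_one] at this
    rw [this, zero_smul]
  · apply le_antisymm
    · intro x hx
      have hsub : x - ψ x • ξ ∈ cosymOrth b ψ S ⊓ LinearMap.ker ψ := by
        constructor
        · exact sub_mem hx (smul_mem _ _ (xi_mem_cosymOrth hξ1 hξ2 hS))
        · simp [LinearMap.mem_ker, hξ1]
      rw [hU] at hsub
      have hx2 : x = ψ x • ξ + (x - ψ x • ξ) := by abel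
      rw [hx2]
      exact add_mem (mem_sup_left (smul_mem _ _ (subset_span rfl)))
        (mem_sup_right hsub)
    · exact sup_le
        (span_le.mpr (Set.singleton_subset_iff.mpr (xi_mem_cosymOrth hξ1 hξ2 hS)))
        (fun x hx y hy => hiso x hx y hy)


lemma iso_extend (hskew : ∀ x y, b x y = - b y x)
    {S : Submodule ℝ V} {v : V} (hS : S ≤ LinearMap.ker ψ)
    (hiso : ∀ x ∈ S, ∀ y ∈ S, Itilde b ψ x y = 0)
    (hv : v ∈ cosymOrth b ψ S ⊓ LinearMap.ker ψ) :
    ∀ x ∈ S ⊔ span ℝ {v}, ∀ y ∈ S ⊔ span ℝ {v}, Itilde b ψ x y = 0 := by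
  intro x hx y hy
  obtain ⟨s, hs, x2, hx2, rfl⟩ := Submodule.mem_sup.mp hx
  obtain ⟨c, rfl⟩ := Submodule.mem_span_singleton.mp hx2
  obtain ⟨t, ht, y2, hy2, rfl⟩ := Submodule.mem_sup.mp hy
  obtain ⟨d, rfl⟩ := Submodule.mem_span_singleton.mp hy2
  have hψv : ψ v = 0 := hv.2
  have h1 : Itilde b ψ s t = 0 := hiso s hs t ht
  have h2 : Itilde b ψ v t = 0 := hv.1 t ht
  have h3 : Itilde b ψ v v = 0 := by
    rw [Itilde_apply, hψv, mul_zero, add_zero]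
    have := hskew v v; linarith
  have h4 : Itilde b ψ s v = 0 := by
    have h5 : Itilde b ψ v s = 0 := hv.1 s hs
    rw [Itilde_apply, hψv, zero_mul, add_zero] at h5
    have hψs : ψ s = 0 := hS hs
    rw [Itilde_apply, hψv, mul_zero, add_zero, hskew, h5, neg_zero]
  simp only [map_add, LinearMap.add_apply, map_smul, LinearMap.smul_apply,
    smul_eq_mul, h1, h2, h3, h4, mul_zero, add_zero, zero_add]

lemma exists_extension (hskew : ∀ x y, b x y = - b y x)
    (hbij : Function.Bijective (Itilde b ψ)) (hξ1 : ψ ξ = 1) (hξ2 : ∀ y, b ξ y = 0)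
    {k : ℕ} {L : Fin k → Submodule ℝ V} (hL : ∀ j, IsLagrangianLike b ψ ξ (L j))
    {S : Submodule ℝ V} (hS : S ≤ LinearMap.ker ψ)
    (hiso : ∀ x ∈ S, ∀ y ∈ S, Itilde b ψ x y = 0)
    (hdisj : ∀ j, S ⊓ L j = ⊥)
    (hne : cosymOrth b ψ S ⊓ LinearMap.ker ψ ≠ S) :
    ∃ v, v ∈ cosymOrth b ψ S ⊓ LinearMap.ker ψ ∧ v ∉ S ∧ ∀ j, v ∉ S ⊔ L j := by
  set U : Submodule ℝ V := cosymOrth b ψ S ⊓ LinearMap.ker ψ with hUdef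
  have hSU : S ≤ U := le_inf (fun x hx y hy => hiso x hx y hy) hS
  let p : Option (Fin k) → Subspace ℝ U := fun i =>
    i.elim (Submodule.comap U.subtype S) (fun j => Submodule.comap U.subtype (S ⊔ L j))
  have hne_top : ∀ i, p i ≠ ⊤ := by
    rintro (_ | j) htop
    · exact hne (le_antisymm (by
        intro x hx
        have := Submodule.comap_subtype_eq_top.mp htop
        exact this hx) hSU)
    · exact perpW_not_le hskew hbij hξ1 hξ2 hS hiso (hdisj j) (hL j) hne
        (Submodule.comap_subtype_eq_top.mp htop)
  have hcov : (⋃ i, (p i : Set U)) ≠ Set.univ := by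
    intro hc
    obtain ⟨i, hi⟩ := Subspace.exists_eq_top_of_iUnion_eq_univ hc
    exact hne_top i hi
  obtain ⟨u, hu⟩ := Set.ne_univ_iff_exists_notMem _ |>.mp hcov
  rw [Set.mem_iUnion] at hu
  push_neg at hu
  refine ⟨(u : V), u.2, ?_, ?_⟩
  · intro hc
    exact hu none (Submodule.mem_comap.mpr hc)
  · intro j hc
    exact hu (some j) (Submodule.mem_comap.mpr hc)

end CosymAux

/-- given finitely many Lagrangian-like subspaces `L₁,…,L_k`,
there is a Lagrangian-like subspace meeting each of them trivially. -/
theorem exists_lagrangianLike_transverse [FiniteDimensional ℝ V]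
    (b : V →ₗ[ℝ] V →ₗ[ℝ] ℝ) (ψ : V →ₗ[ℝ] ℝ) (h : IsCosymplectic b ψ)
    (ξ : V) (hξ1 : ψ ξ = 1) (hξ2 : ∀ y, b ξ y = 0)
    (k : ℕ) (L : Fin k → Submodule ℝ V)
    (hL : ∀ j, IsLagrangianLike b ψ ξ (L j)) :
    ∃ L' : Submodule ℝ V, IsLagrangianLike b ψ ξ L' ∧
      ∀ j, L' ⊓ L j = ⊥ := by
  obtain ⟨hskew, -, hbij⟩ := h
  suffices H : ∀ (m : ℕ) (S : Submodule ℝ V), S ≤ LinearMap.ker ψ →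
      (∀ x ∈ S, ∀ y ∈ S, Itilde b ψ x y = 0) → (∀ j, S ⊓ L j = ⊥) →
      finrank ℝ (LinearMap.ker ψ) ≤ finrank ℝ S + m →
      ∃ L' : Submodule ℝ V, IsLagrangianLike b ψ ξ L' ∧ ∀ j, L' ⊓ L j = ⊥ by
    refine H (finrank ℝ (LinearMap.ker ψ)) ⊥ bot_le ?_ (fun j => bot_inf_eq _) (by simp)
    intro x hx
    rw [Submodule.mem_bot] at hx
    subst hx
    intro y hy
    simp
  intro m
  induction m with
  | zero =>
    intro S hS hiso hdisj hdim
    have hSU : S ≤ cosymOrth b ψ S ⊓ LinearMap.ker ψ :=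
      le_inf (fun x hx y hy => hiso x hx y hy) hS
    have hU : cosymOrth b ψ S ⊓ LinearMap.ker ψ = S := by
      refine (Submodule.eq_of_le_of_finrank_le hSU ?_).symm
      have h1 : finrank ℝ (cosymOrth b ψ S ⊓ LinearMap.ker ψ : Submodule ℝ V) ≤
          finrank ℝ (LinearMap.ker ψ) :=
        Submodule.finrank_mono inf_le_right
      omega
    exact ⟨S, CosymAux.isLagrangianLike_of_perpW_eq hξ1 hξ2 hS hiso hU, hdisj⟩
  | succ m ih =>
    intro S hS hiso hdisj hdim
    by_cases hU : cosymOrth b ψ S ⊓ LinearMap.ker ψ = S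
    · exact ⟨S, CosymAux.isLagrangianLike_of_perpW_eq hξ1 hξ2 hS hiso hU, hdisj⟩
    · obtain ⟨v, hvU, hvS, hvL⟩ :=
        CosymAux.exists_extension hskew hbij hξ1 hξ2 hL hS hiso hdisj hU
      refine ih (S ⊔ span ℝ {v}) ?_ ?_ ?_ ?_
      · exact sup_le hS (span_le.mpr (Set.singleton_subset_iff.mpr hvU.2))
      · exact CosymAux.iso_extend hskew hS hiso hvU
      · intro j
        rw [eq_bot_iff]
        intro x hx
        obtain ⟨hx1, hx2⟩ := hx
        obtain ⟨s, hs, x2, hx3, rfl⟩ := Submodule.mem_sup.mp hx1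
        obtain ⟨c, rfl⟩ := Submodule.mem_span_singleton.mp hx3
        by_cases hc : c = 0
        · subst hc
          rw [zero_smul, add_zero] at hx2 ⊢
          have : s ∈ S ⊓ L j := ⟨hs, hx2⟩
          rw [hdisj j] at this
          exact this
        · exfalso
          apply hvL j
          have : v = c⁻¹ • ((s + c • v) - s) := by
            rw [add_sub_cancel_left, smul_smul, inv_mul_cancel₀ hc, one_smul]
          rw [this]
          exact smul_mem _ _ (sub_mem (mem_sup_right hx2) (mem_sup_left hs))
      · have hlt : S < S ⊔ span ℝ {v} := by
          refine lt_of_le_of_ne le_sup_left ?_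
          intro hc
          exact hvS (hc ▸ mem_sup_right (subset_span rfl))
        have := Submodule.finrank_lt_finrank_of_lt hlt
        omega
end

section
/- Let V be a (2n+1)-dimensional real vector space carrying two cosymplectic structures (b₁,ψ₁) and (b₂,ψ₂), and let U be a subspace which is Lagrangian-like for both. Then there exists a linear isomorphism L : V → V with L restricted to U equal to the identity, L*ψ₂ = ψ₁ and L*b₂ = b₁. -/
open Module Submodule

variable {V : Type*} [AddCommGroup V] [Module ℝ V]

section Cosymplectic

variable {b : V →ₗ[ℝ] V →ₗ[ℝ] ℝ} {ψ : V →ₗ[ℝ] ℝ} {ξ : V} {U : Submodule ℝ V}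

lemma map_eq_zero_of_isotropic (hanti : ∀ x y, b x y = -b y x)
    (hiso : ∀ x ∈ U, ∀ y ∈ U, Itilde b ψ x y = 0) {u : V} (hu : u ∈ U) : ψ u = 0 := by
  have h := hiso u hu u hu
  rw [Itilde_apply, show b u u = 0 by linarith [hanti u u], zero_add] at h
  exact mul_self_eq_zero.mp h

lemma apply_eq_zero_of_isotropic (hanti : ∀ x y, b x y = -b y x)
    (hiso : ∀ x ∈ U, ∀ y ∈ U, Itilde b ψ x y = 0) {u v : V} (hu : u ∈ U) (hv : v ∈ U) :
    b u v = 0 := by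
  simpa [Itilde_apply, map_eq_zero_of_isotropic hanti hiso hu] using hiso u hu v hv

variable (b ψ U) in
noncomputable def cosymPairing : V →ₗ[ℝ] Dual ℝ U × ℝ :=
  (U.dualRestrict ∘ₗ b).prod ψ

@[simp]
lemma cosymPairing_fst_apply (v : V) (u : U) : (cosymPairing b ψ U v).1 u = b v u := rfl

@[simp]
lemma cosymPairing_snd (v : V) : (cosymPairing b ψ U v).2 = ψ v := rfl

lemma apply_eq_of_cosymPairing_eq {v : V} {x : Dual ℝ U × ℝ} (h : cosymPairing b ψ U v = x)
    (u : U) : b v u = x.1 u := by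
  rw [← h, cosymPairing_fst_apply]

lemma cosymPairing_eq_zero_of_mem (hanti : ∀ x y, b x y = -b y x)
    (hiso : ∀ x ∈ U, ∀ y ∈ U, Itilde b ψ x y = 0) {v : V} (hv : v ∈ U) :
    cosymPairing b ψ U v = 0 := by
  ext u
  · exact apply_eq_zero_of_isotropic hanti hiso hv u.2
  · exact map_eq_zero_of_isotropic hanti hiso hv

lemma cosymPairing_eq_zero_iff (hanti : ∀ x y, b x y = -b y x) (hψξ : ψ ξ = 1)
    (hU : IsLagrangianLike b ψ ξ U) {v : V} : cosymPairing b ψ U v = 0 ↔ v ∈ U := by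
  have hψU := fun u (hu : u ∈ U) ↦ map_eq_zero_of_isotropic hanti hU.1 hu
  constructor
  · intro hv
    have hψv : ψ v = 0 := congrArg Prod.snd hv
    have hvorth : v ∈ cosymOrth b ψ U := fun y hy ↦ by
      rw [Itilde_apply, hψv, zero_mul, add_zero]
      exact apply_eq_of_cosymPairing_eq hv ⟨y, hy⟩
    rw [hU.2.2.2] at hvorth
    obtain ⟨_, hs, u, hu, rfl⟩ := mem_sup.mp hvorth
    obtain ⟨a, rfl⟩ := mem_span_singleton.mp hs
    rw [map_add, map_smul, hψξ, hψU u hu, smul_eq_mul, mul_one, add_zero] at hψv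
    simpa [hψv] using hu
  · exact cosymPairing_eq_zero_of_mem hanti hU.1

lemma cosymPairing_surjective (hsurj : Function.Surjective (Itilde b ψ)) (hψξ : ψ ξ = 1)
    (hbξ : ∀ y, b ξ y = 0) (hψU : ∀ u ∈ U, ψ u = 0) :
    Function.Surjective (cosymPairing b ψ U) := by
  rintro ⟨f, a⟩
  obtain ⟨v, hv⟩ := hsurj (Subspace.dualLift U f)
  refine ⟨v + (a - ψ v) • ξ, ?_⟩
  ext u
  · have h := LinearMap.congr_fun hv u
    rw [Itilde_apply, hψU u u.2, mul_zero, add_zero, Subspace.dualLift_of_subtype] at h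
    simp [hbξ, h]
  · simp [hψξ]

lemma exists_isotropic_lift [FiniteDimensional ℝ U] (hanti : ∀ x y, b x y = -b y x)
    (hiso : ∀ x ∈ U, ∀ y ∈ U, Itilde b ψ x y = 0) (t₀ : Dual ℝ U →ₗ[ℝ] V)
    (ht₀ : ∀ f, cosymPairing b ψ U (t₀ f) = (f, 0)) :
    ∃ t : Dual ℝ U →ₗ[ℝ] V,
      (∀ f, cosymPairing b ψ U (t f) = (f, 0)) ∧ ∀ f g, b (t f) (t g) = 0 := by
  have hpair (f : Dual ℝ U) (u : U) : b (t₀ f) u = f u := apply_eq_of_cosymPairing_eq (ht₀ f) u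
  -- Adding `ρ f ∈ U` with `g (ρ f) = b (t₀ f) (t₀ g) / 2` cancels `b (t₀ f) (t₀ g)` by
  -- antisymmetry; `ρ` exists because `U` is reflexive.
  let ρ : Dual ℝ U →ₗ[ℝ] U := (evalEquiv ℝ U).symm.toLinearMap ∘ₗ ((1 / 2 : ℝ) • b.compl₁₂ t₀ t₀)
  have hρ (f g : Dual ℝ U) : g (ρ f) = b (t₀ f) (t₀ g) / 2 := by
    simp [ρ, div_eq_inv_mul]
  refine ⟨t₀ + U.subtype ∘ₗ ρ, fun f ↦ ?_, fun f g ↦ ?_⟩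
  · simp [ht₀, cosymPairing_eq_zero_of_mem hanti hiso (ρ f).2]
  · have hρρ : b (ρ f) (ρ g) = 0 := apply_eq_zero_of_isotropic hanti hiso (ρ f).2 (ρ g).2
    simp only [LinearMap.add_apply, LinearMap.comp_apply, Submodule.subtype_apply, map_add,
      LinearMap.add_apply, hρρ, hpair, hanti (ρ f : V), hρ]
    linarith [hanti (t₀ f) (t₀ g)]

lemma exists_isotropic_section [FiniteDimensional ℝ U] (hanti : ∀ x y, b x y = -b y x)
    (hsurj : Function.Surjective (Itilde b ψ)) (hψξ : ψ ξ = 1) (hbξ : ∀ y, b ξ y = 0)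
    (hiso : ∀ x ∈ U, ∀ y ∈ U, Itilde b ψ x y = 0) :
    ∃ s : Dual ℝ U × ℝ →ₗ[ℝ] V,
      (∀ x, cosymPairing b ψ U (s x) = x) ∧ ∀ x y, b (s x) (s y) = 0 := by
  obtain ⟨s₀, hs₀⟩ := (cosymPairing b ψ U).exists_rightInverse_of_surjective
    (LinearMap.range_eq_top_of_surjective _ (cosymPairing_surjective hsurj hψξ hbξ
      fun _ ↦ map_eq_zero_of_isotropic hanti hiso))
  obtain ⟨t, ht, ht_iso⟩ := exists_isotropic_lift hanti hiso (s₀ ∘ₗ LinearMap.inl ℝ _ ℝ)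
    fun f ↦ LinearMap.congr_fun hs₀ (f, 0)
  have hξpair : cosymPairing b ψ U ξ = (0, 1) := by
    ext u
    · exact hbξ u
    · exact hψξ
  refine ⟨t.coprod (LinearMap.toSpanSingleton ℝ V ξ), fun ⟨f, a⟩ ↦ ?_, fun ⟨f, a⟩ ⟨g, c⟩ ↦ ?_⟩
  · simp [ht, hξpair]
  · simp [ht_iso, hbξ, hanti _ ξ]

lemma exists_normalForm_linearEquiv [FiniteDimensional ℝ U] (hanti : ∀ x y, b x y = -b y x)
    (hsurj : Function.Surjective (Itilde b ψ)) (hψξ : ψ ξ = 1) (hbξ : ∀ y, b ξ y = 0)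
    (hU : IsLagrangianLike b ψ ξ U) :
    ∃ φ : (U × (Dual ℝ U × ℝ)) ≃ₗ[ℝ] V, (∀ u : U, φ (u, 0) = u) ∧
      (∀ p, ψ (φ p) = p.2.2) ∧ ∀ p q, b (φ p) (φ q) = p.2.1 q.1 - q.2.1 p.1 := by
  obtain ⟨s, hs, hs_iso⟩ := exists_isotropic_section hanti hsurj hψξ hbξ hU.1
  have hΘU (u : U) : cosymPairing b ψ U u = 0 := cosymPairing_eq_zero_of_mem hanti hU.1 u.2
  have hφ : Function.Bijective (U.subtype.coprod s) := by
    refine ⟨(injective_iff_map_eq_zero _).mpr fun ⟨u, x⟩ h ↦ ?_, fun v ↦ ?_⟩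
    · have hx : x = 0 := by
        simpa [hΘU, hs] using congrArg (cosymPairing b ψ U) h
      subst hx
      simpa using h
    · have hv : v - s (cosymPairing b ψ U v) ∈ U := by
        rw [← cosymPairing_eq_zero_iff hanti hψξ hU]
        simp [hs]
      exact ⟨(⟨_, hv⟩, cosymPairing b ψ U v), by simp⟩
  refine ⟨.ofBijective _ hφ, fun u ↦ by simp, fun ⟨u, x⟩ ↦ ?_, fun ⟨u, x⟩ ⟨u', y⟩ ↦ ?_⟩
  · simpa [map_eq_zero_of_isotropic hanti hU.1 u.2] using congrArg Prod.snd (hs x)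
  · have hsU (z : Dual ℝ U × ℝ) (w : U) : b (s z) w = z.1 w := apply_eq_of_cosymPairing_eq (hs z) w
    simp only [LinearEquiv.ofBijective_apply, LinearMap.coprod_apply, Submodule.subtype_apply,
      map_add, LinearMap.add_apply, apply_eq_zero_of_isotropic hanti hU.1 u.2 u'.2, hs_iso,
      hsU, hanti (u : V) (s y)]
    ring

end Cosymplectic

theorem exists_linearEquiv_of_biLagrangian_general [FiniteDimensional ℝ V]
    (b₁ b₂ : V →ₗ[ℝ] V →ₗ[ℝ] ℝ) (ψ₁ ψ₂ : V →ₗ[ℝ] ℝ)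
    (h₁ : IsCosymplectic b₁ ψ₁) (h₂ : IsCosymplectic b₂ ψ₂)
    (ξ₁ ξ₂ : V) (hξ₁1 : ψ₁ ξ₁ = 1) (hξ₁2 : ∀ y, b₁ ξ₁ y = 0)
    (hξ₂1 : ψ₂ ξ₂ = 1) (hξ₂2 : ∀ y, b₂ ξ₂ y = 0)
    (U : Submodule ℝ V)
    (hU₁ : IsLagrangianLike b₁ ψ₁ ξ₁ U) (hU₂ : IsLagrangianLike b₂ ψ₂ ξ₂ U) :
    ∃ L : V ≃ₗ[ℝ] V, (∀ u ∈ U, L u = u) ∧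
      (∀ v, ψ₂ (L v) = ψ₁ v) ∧
      (∀ u v, b₂ (L u) (L v) = b₁ u v) := by
  obtain ⟨φ₁, hφ₁U, hφ₁ψ, hφ₁b⟩ := exists_normalForm_linearEquiv h₁.1 h₁.2.2.2 hξ₁1 hξ₁2 hU₁
  obtain ⟨φ₂, hφ₂U, hφ₂ψ, hφ₂b⟩ := exists_normalForm_linearEquiv h₂.1 h₂.2.2.2 hξ₂1 hξ₂2 hU₂
  refine ⟨φ₁.symm.trans φ₂, fun u hu ↦ ?_, fun v ↦ ?_, fun v w ↦ ?_⟩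
  · rw [LinearEquiv.trans_apply, φ₁.symm_apply_eq.mpr (hφ₁U ⟨u, hu⟩).symm, hφ₂U]
  · obtain ⟨p, rfl⟩ := φ₁.surjective v
    simp [hφ₁ψ, hφ₂ψ]
  · obtain ⟨p, rfl⟩ := φ₁.surjective v
    obtain ⟨q, rfl⟩ := φ₁.surjective w
    simp [hφ₁b, hφ₂b]

/-- if `U` is Lagrangian-like for two cosymplectic structures
`(b₁,ψ₁)` and `(b₂,ψ₂)` on `V`, then there is a linear isomorphism `L` of `V`
fixing `U` pointwise with `L*ψ₂ = ψ₁` and `L*b₂ = b₁`. -/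
theorem exists_linearEquiv_of_biLagrangian [FiniteDimensional ℝ V] (n : ℕ)
    (hdim : finrank ℝ V = 2 * n + 1)
    (b₁ b₂ : V →ₗ[ℝ] V →ₗ[ℝ] ℝ) (ψ₁ ψ₂ : V →ₗ[ℝ] ℝ)
    (h₁ : IsCosymplectic b₁ ψ₁) (h₂ : IsCosymplectic b₂ ψ₂)
    (ξ₁ ξ₂ : V) (hξ₁1 : ψ₁ ξ₁ = 1) (hξ₁2 : ∀ y, b₁ ξ₁ y = 0)
    (hξ₂1 : ψ₂ ξ₂ = 1) (hξ₂2 : ∀ y, b₂ ξ₂ y = 0)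
    (U : Submodule ℝ V)
    (hU₁ : IsLagrangianLike b₁ ψ₁ ξ₁ U) (hU₂ : IsLagrangianLike b₂ ψ₂ ξ₂ U) :
    ∃ L : V ≃ₗ[ℝ] V, (∀ u ∈ U, L u = u) ∧
      (∀ v, ψ₂ (L v) = ψ₁ v) ∧
      (∀ u v, b₂ (L u) (L v) = b₁ u v) :=
  exists_linearEquiv_of_biLagrangian_general b₁ b₂ ψ₁ ψ₂ h₁ h₂ ξ₁ ξ₂ hξ₁1 hξ₁2 hξ₂1 hξ₂2 U hU₁ hU₂
end
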